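/- If X ⊆ ∏_{j<ω} Z_j, where each Z_j is compact Hausdorff and either second countable or a LOTS, then X is not weird. -/

import Mathlib

/-- A space is scattered iff every nonempty subset has a point isolated in it. -/
def ScatteredSpace (X : Type*) [TopologicalSpace X] : Prop :=
  ∀ S : Set X, S.Nonempty → ∃ x ∈ S, ∃ U : Set X, IsOpen U ∧ U ∩ S = {x}

/-- A space is weird iff it is compact Hausdorff, not scattered, and no subset
is simultaneously perfect (closed, nonempty, no isolated points) and totally
disconnected. -/
def Weird (X : Type*) [TopologicalSpace X] : Prop :=
  CompactSpace X ∧ T2Space X ∧ ¬ ScatteredSpace X ∧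
    ∀ P : Set X, Perfect P → P.Nonempty → ¬ IsTotallyDisconnected P

/-!
A non-scattered compact space contains a nonempty perfect set `P`. Inside `P` we build a Cantor
scheme of perfect sets, trimming each node so that a prescribed countable family of open sets
no longer cuts it (each node lies in the closure of the open set or misses it). The open sets are
pulled back from the coordinates: a countable basis of a second countable factor, and the rays
`Ioi z` of a LOTS factor, where `z` is the coordinate of a point chosen at some node, so the
family grows with the scheme. A minimal closed set mapping onto the branch space `ℕ → Bool` is
perfect, and each preconnected subset of it lies in a single branch; there the trimming makes
every coordinate constant (for a LOTS factor because the chosen points are dense), so the set is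
a point.
-/

open Set Topology Filter TopologicalSpace

theorem exists_perfect_nonempty_of_not_scatteredSpace {X : Type*} [TopologicalSpace X]
    (h : ¬ ScatteredSpace X) : ∃ P : Set X, Perfect P ∧ P.Nonempty := by
  simp only [ScatteredSpace, not_forall, not_exists, not_and, exists_prop] at h
  obtain ⟨S, hSne, hS⟩ := h
  refine ⟨closure S, Preperfect.perfect_closure fun x hx => accPt_iff_nhds.2 fun U hU => ?_,
    hSne.closure⟩
  obtain ⟨V, hVU, hV, hxV⟩ := mem_nhds_iff.1 hU
  by_contra! hUS
  exact hS x hx V hV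
    (eq_singleton_iff_unique_mem.2 ⟨⟨hxV, hx⟩, fun y hy => hUS y ⟨hVU hy.1, hy.2⟩⟩)

theorem Perfect.image_of_injOn {A B : Type*} [TopologicalSpace A] [TopologicalSpace B]
    [T2Space B] {f : A → B} (hf : Continuous f) {E : Set A} (hE : Perfect E)
    (hc : IsCompact E) (hinj : InjOn f E) : Perfect (f '' E) := by
  refine ⟨(hc.image hf).isClosed, ?_⟩
  rintro _ ⟨x, hx, rfl⟩
  refine accPt_iff_nhds.2 fun U hU => ?_
  obtain ⟨y, ⟨hyU, hyE⟩, hyx⟩ := accPt_iff_nhds.1 (hE.acc x hx) _ (hf.continuousAt hU)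
  exact ⟨f y, ⟨hyU, mem_image_of_mem f hyE⟩, fun h => hyx (hinj hyE hx h)⟩

/-- A minimal closed set mapping onto `T` is perfect: removing an isolated point would leave a
compact image containing all but one point of `T`, and that complement of a point is dense. -/
theorem exists_perfect_subset_image_eq_univ {A T : Type*} [TopologicalSpace A]
    [TopologicalSpace T] [CompactSpace A] [T2Space T] [∀ t : T, (𝓝[≠] t).NeBot]
    {f : A → T} (hf : Continuous f) {K : Set A} (hK : IsClosed K) (hfK : f '' K = univ) :
    ∃ E ⊆ K, Perfect E ∧ f '' E = univ := by
  set S : Set (Set A) := {E | IsClosed E ∧ f '' E = univ}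
  have hchain : ∀ c ⊆ S, IsChain (· ⊆ ·) c → c.Nonempty → ∃ lb ∈ S, ∀ s ∈ c, lb ⊆ s := by
    intro c hcS hc hcne
    have : Nonempty c := hcne.to_subtype
    refine ⟨⋂₀ c, ⟨isClosed_sInter fun E hE => (hcS hE).1, eq_univ_of_forall fun t => ?_⟩,
      fun E hE => sInter_subset_of_mem hE⟩
    have hfiber (E : c) : IsClosed ((E : Set A) ∩ f ⁻¹' {t}) :=
      (hcS E.2).1.inter (isClosed_singleton.preimage hf)
    obtain ⟨y, hy⟩ := IsCompact.nonempty_iInter_of_directed_nonempty_isCompact_isClosed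
      (fun E : c => (E : Set A) ∩ f ⁻¹' {t})
      (fun E₁ E₂ => (hc.total E₁.2 E₂.2).elim
        (fun h => ⟨E₁, subset_rfl, inter_subset_inter_left _ h⟩)
        (fun h => ⟨E₂, inter_subset_inter_left _ h, subset_rfl⟩))
      (fun E => by obtain ⟨y, hy, rfl⟩ := (hcS E.2).2.symm ▸ mem_univ t; exact ⟨y, hy, rfl⟩)
      (fun E => (hfiber E).isCompact) hfiber
    simp only [mem_iInter] at hy
    exact ⟨y, mem_sInter.2 fun E hE => (hy ⟨E, hE⟩).1, (hy (Classical.arbitrary c)).2⟩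
  obtain ⟨E, hEK, hmin⟩ := zorn_superset_nonempty S hchain K ⟨hK, hfK⟩
  refine ⟨E, hEK, ⟨hmin.prop.1, fun x hx => ?_⟩, hmin.prop.2⟩
  by_contra hacc
  rw [accPt_iff_nhds] at hacc
  push Not at hacc
  obtain ⟨U, hU, hUE⟩ := hacc
  obtain ⟨V, hVU, hV, hxV⟩ := mem_nhds_iff.1 hU
  have hclosed : IsClosed (E \ V) := hmin.prop.1.sdiff hV
  have hcompl : {f x}ᶜ ⊆ f '' (E \ V) := by
    intro t ht
    obtain ⟨y, hy, rfl⟩ := hmin.prop.2.symm ▸ mem_univ t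
    exact ⟨y, ⟨hy, fun hyV => ht (congrArg f (hUE y ⟨hVU hyV, hy⟩))⟩, rfl⟩
  have himage : f '' (E \ V) = univ := eq_univ_of_univ_subset <|
    closure_compl_singleton (f x) ▸ closure_minimal hcompl (hclosed.isCompact.image hf).isClosed
  exact (hmin.2 ⟨hclosed, himage⟩ sdiff_subset hx).2 hxV

/-- An open set `U` *cuts* `A` if `A` meets `U` without lying in `closure U`. -/
structure SeparatingFamily (Z : Type*) [TopologicalSpace Z] where
  U : ℕ → Z → Opens Z
  subsingleton : ∀ {A D : Set Z}, IsPreconnected A → A ⊆ closure D →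
    (∀ k, ∀ z ∈ D, A ⊆ closure (U k z) ∨ Disjoint A (U k z)) → A.Subsingleton

namespace SeparatingFamily

variable {Z : Type*} [TopologicalSpace Z]

theorem exists_seq_separating [T2Space Z] [SecondCountableTopology Z] :
    ∃ U : ℕ → Set Z, (∀ k, IsOpen (U k)) ∧ ∀ a b, a ≠ b → ∃ k, a ∈ U k ∧ b ∉ closure (U k) := by
  have hc := countable_countableBasis Z
  refine ⟨enumerateCountable hc ∅, fun k => ?_, fun a b hab => ?_⟩
  · rcases mem_insert_iff.1 (range_enumerateCountable_subset hc ∅ ⟨k, rfl⟩) with h | h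
    · rw [h]
      exact isOpen_empty
    · exact isOpen_of_mem_countableBasis h
  · obtain ⟨U, V, hU, hV, haU, hbV, hUV⟩ := t2_separation hab
    obtain ⟨B, hB, haB, hBU⟩ := (isBasis_countableBasis Z).exists_subset_of_mem_open haU hU
    obtain ⟨k, rfl⟩ := subset_range_enumerate hc ∅ hB
    exact ⟨k, haB, fun hb => disjoint_left.1 ((hUV.mono_left hBU).closure_left hV) hb hbV⟩

theorem nonempty_of_secondCountable [T2Space Z] [SecondCountableTopology Z] :
    Nonempty (SeparatingFamily Z) := by
  obtain ⟨U, hU, hsep⟩ := exists_seq_separating (Z := Z)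
  refine ⟨⟨fun k _ => ⟨U k, hU k⟩, fun {A D} _ hAD hcut a ha b hb => ?_⟩⟩
  by_contra hab
  obtain ⟨k, hak, hbk⟩ := hsep a b hab
  obtain ⟨z, hz⟩ := (closure_nonempty_iff.1 ⟨a, hAD ha⟩)
  rcases hcut k z hz with h | h
  · exact hbk (h hb)
  · exact disjoint_left.1 h ha hak

/-- In a LOTS the rays `Ioi z` suffice: between two points of a preconnected set lies a third,
hence (by density) some `z ∈ D`, and then `Ioi z` cuts the set. -/
theorem nonempty_of_orderTopology [LinearOrder Z] [OrderTopology Z] :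
    Nonempty (SeparatingFamily Z) := by
  refine ⟨⟨fun _ z => ⟨Ioi z, isOpen_Ioi⟩, fun {A D} hA hAD hcut => ?_⟩⟩
  have hnlt : ∀ c ∈ A, ∀ d ∈ A, ¬ c < d := by
    intro c hc d hd hcd
    obtain ⟨y, hyA, hyd, hcy⟩ := hA (Iio d) (Ioi c) isOpen_Iio isOpen_Ioi
      (fun y _ => (lt_or_ge y d).imp id hcd.trans_le) ⟨c, hc, hcd⟩ ⟨d, hd, hcd⟩
    obtain ⟨z, ⟨hcz, hzd⟩, hzD⟩ := mem_closure_iff.1 (hAD hyA) (Ioo c d) isOpen_Ioo ⟨hcy, hyd⟩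
    rcases hcut 0 z hzD with h | h
    · exact (closure_minimal Ioi_subset_Ici_self isClosed_Ici (h hc)).not_gt hcz
    · exact disjoint_left.1 h hd hzd
  exact fun a ha b hb => le_antisymm (not_lt.1 (hnlt b hb a ha)) (not_lt.1 (hnlt a ha b hb))

end SeparatingFamily

abbrev NonemptyPerfect (Y : Type*) [TopologicalSpace Y] := {A : Set Y // Perfect A ∧ A.Nonempty}

namespace NonemptyPerfect

variable {Y : Type*} [TopologicalSpace Y]

noncomputable def point (A : NonemptyPerfect Y) : Y := A.2.2.some

theorem point_mem (A : NonemptyPerfect Y) : A.point ∈ (A : Set Y) := A.2.2.some_mem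

open scoped Classical in
noncomputable def trim (U : Opens Y) (A : NonemptyPerfect Y) : NonemptyPerfect Y :=
  if h : ((U : Set Y) ∩ A).Nonempty then
    ⟨closure (U ∩ A), A.2.1.closure_nhds_inter h.some h.some_mem.2 h.some_mem.1 U.isOpen⟩
  else A

theorem trim_subset (U : Opens Y) (A : NonemptyPerfect Y) : (A.trim U : Set Y) ⊆ A := by
  unfold trim
  split_ifs
  · exact closure_minimal inter_subset_right A.2.1.closed
  · exact subset_rfl

theorem trim_subset_closure_or_disjoint (U : Opens Y) (A : NonemptyPerfect Y) :
    (A.trim U : Set Y) ⊆ closure U ∨ Disjoint (A.trim U : Set Y) U := by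
  unfold trim
  split_ifs with h
  · exact Or.inl (closure_mono inter_subset_left)
  · exact Or.inr (disjoint_left.2 fun y hyA hyU => h ⟨y, hyU, hyA⟩)

variable [T25Space Y]

theorem exists_halves (A : NonemptyPerfect Y) : ∃ C : Bool → NonemptyPerfect Y,
    (∀ b, (C b : Set Y) ⊆ A) ∧ Disjoint (C false : Set Y) (C true) := by
  obtain ⟨C₀, C₁, ⟨h₀, h₀ne, h₀A⟩, ⟨h₁, h₁ne, h₁A⟩, hd⟩ := A.2.1.splitting A.2.2
  exact ⟨fun b => cond b ⟨C₁, h₁, h₁ne⟩ ⟨C₀, h₀, h₀ne⟩, fun b => by cases b <;> assumption, hd⟩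

noncomputable def half (A : NonemptyPerfect Y) (b : Bool) : NonemptyPerfect Y :=
  A.exists_halves.choose b

theorem half_subset (A : NonemptyPerfect Y) (b : Bool) : (A.half b : Set Y) ⊆ A :=
  A.exists_halves.choose_spec.1 b

theorem disjoint_half (A : NonemptyPerfect Y) (b : Bool) :
    Disjoint (A.half b : Set Y) (A.half !b) := by
  cases b
  · exact A.exists_halves.choose_spec.2
  · exact A.exists_halves.choose_spec.2.symm

end NonemptyPerfect

namespace CantorScheme

noncomputable def task {ι : Type*} [Encodable ι] [Inhabited ι] (n : ℕ) : ι × List Bool :=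
  (Encodable.decode n.unpair.1).getD default

theorem exists_task_eq {ι : Type*} [Encodable ι] [Inhabited ι] (o : ι × List Bool) (N : ℕ) :
    ∃ n ≥ N, task n = o :=
  ⟨Nat.pair (Encodable.encode o) N, Nat.right_le_pair _ _, by simp [task, Encodable.encodek]⟩

def path (x : ℕ → Bool) : ℕ → List Bool
  | 0 => []
  | n + 1 => x n :: path x n

@[simp]
theorem length_path (x : ℕ → Bool) (n : ℕ) : (path x n).length = n := by
  induction n with
  | zero => rfl
  | succ n ih => simp [path, ih]

theorem continuous_path (n : ℕ) : Continuous fun x : ℕ → Bool => path x n := by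
  induction n with
  | zero => exact continuous_const
  | succ n ih =>
    exact (continuous_of_discreteTopology (f := fun p : Bool × List Bool => p.1 :: p.2)).comp
      ((continuous_apply n).prodMk ih)

variable {Y ι : Type*} [TopologicalSpace Y] [T25Space Y] [Encodable ι] [Inhabited ι]
  (W : ι → Y → Opens Y) (P : NonemptyPerfect Y)

/-- Truncating the node named by `task` only matters when it is longer than `s`, i.e. not built
yet; it keeps the recursion well founded. -/
noncomputable def scheme : List Bool → NonemptyPerfect Y
  | [] => P
  | b :: s =>
    ((scheme s).trim (W (task (ι := ι) s.length).1
      (scheme ((task (ι := ι) s.length).2.take s.length)).point)).half b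
termination_by s => s.length
decreasing_by all_goals simp

theorem scheme_cons (b : Bool) (s : List Bool) : scheme W P (b :: s) =
    ((scheme W P s).trim (W (task (ι := ι) s.length).1
      (scheme W P ((task (ι := ι) s.length).2.take s.length)).point)).half b := by
  rw [scheme]

theorem scheme_cons_subset (b : Bool) (s : List Bool) :
    (scheme W P (b :: s) : Set Y) ⊆ scheme W P s := by
  rw [scheme_cons]
  exact (NonemptyPerfect.half_subset _ b).trans (NonemptyPerfect.trim_subset _ _)

theorem disjoint_scheme_cons (b : Bool) (s : List Bool) :
    Disjoint (scheme W P (b :: s) : Set Y) (scheme W P ((!b) :: s)) := by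
  rw [scheme_cons, scheme_cons]
  exact NonemptyPerfect.disjoint_half _ b

theorem scheme_cons_subset_closure_or_disjoint {b : Bool} {s t : List Bool} {k : ι}
    (ht : t.length ≤ s.length) (htask : task s.length = (k, t)) :
    (scheme W P (b :: s) : Set Y) ⊆ closure (W k (scheme W P t).point) ∨
      Disjoint (scheme W P (b :: s) : Set Y) (W k (scheme W P t).point) := by
  rw [scheme_cons, htask, List.take_of_length_le ht]
  have hsub := NonemptyPerfect.half_subset
    ((scheme W P s).trim (W k (scheme W P t).point)) b
  exact (NonemptyPerfect.trim_subset_closure_or_disjoint _ _).imp hsub.trans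
    (Disjoint.mono_left hsub)

theorem scheme_path_antitone (x : ℕ → Bool) :
    Antitone fun n => (scheme W P (path x n) : Set Y) :=
  antitone_nat_of_succ_le fun n => scheme_cons_subset W P (x n) (path x n)

theorem disjoint_scheme_path {x x' : ℕ → Bool} {n : ℕ} (h : path x n ≠ path x' n) :
    Disjoint (scheme W P (path x n) : Set Y) (scheme W P (path x' n)) := by
  induction n with
  | zero => exact absurd rfl h
  | succ n ih =>
    by_cases hn : path x n = path x' n
    · have hx : x' n = !x n := Bool.eq_not.2 fun he => h (by simp [path, he, hn])
      simp only [path, hx, hn]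
      exact disjoint_scheme_cons W P (x n) (path x' n)
    · exact (ih hn).mono (scheme_cons_subset W P _ _) (scheme_cons_subset W P _ _)

def branch (x : ℕ → Bool) : Set Y := ⋂ n, (scheme W P (path x n) : Set Y)

theorem disjoint_branch {x x' : ℕ → Bool} (h : x ≠ x') :
    Disjoint (branch W P x) (branch W P x') := by
  obtain ⟨n, hn⟩ := Function.ne_iff.1 h
  have hpath : path x (n + 1) ≠ path x' (n + 1) := fun he => hn (List.cons.inj he).1
  exact (disjoint_scheme_path W P hpath).mono (iInter_subset _ _) (iInter_subset _ _)

theorem branch_subset_closure_or_disjoint (x : ℕ → Bool) (k : ι) (t : List Bool) :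
    branch W P x ⊆ closure (W k (scheme W P t).point) ∨
      Disjoint (branch W P x) (W k (scheme W P t).point) := by
  obtain ⟨n, hn, htask⟩ := exists_task_eq (k, t) t.length
  have hsub : branch W P x ⊆ scheme W P (x n :: path x n) := iInter_subset _ (n + 1)
  exact (scheme_cons_subset_closure_or_disjoint W P (by simpa using hn)
    (by simpa using htask)).imp hsub.trans (Disjoint.mono_left hsub)

/-- On the union of the branches the nodes of each level are disjoint closed sets, so a
preconnected set follows a single branch. -/
theorem exists_subset_branch {C : Set Y} (hC : IsPreconnected C)
    (hCbr : ∀ y ∈ C, ∃ x, y ∈ branch W P x) : ∃ x, C ⊆ branch W P x := by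
  rcases C.eq_empty_or_nonempty with rfl | ⟨c, hc⟩
  · exact ⟨fun _ => false, empty_subset _⟩
  obtain ⟨x₀, hc₀⟩ := hCbr c hc
  refine ⟨x₀, fun y hy => mem_iInter.2 fun n => ?_⟩
  induction n generalizing y with
  | zero =>
    obtain ⟨x, hx⟩ := hCbr y hy
    exact mem_iInter.1 hx 0
  | succ n ih =>
    have hcover : C ⊆ (scheme W P (x₀ n :: path x₀ n) : Set Y) ∪
        scheme W P ((!x₀ n) :: path x₀ n) := by
      intro z hz
      obtain ⟨x, hx⟩ := hCbr z hz
      have hpath : path x n = path x₀ n := by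
        by_contra hne
        exact disjoint_left.1 (disjoint_scheme_path W P hne) (mem_iInter.1 hx n) (ih z hz)
      have hzx : z ∈ (scheme W P (x n :: path x₀ n) : Set Y) := hpath ▸ mem_iInter.1 hx (n + 1)
      by_cases hb : x n = x₀ n
      · exact Or.inl (hb ▸ hzx)
      · exact Or.inr (Bool.eq_not.2 hb ▸ hzx)
    have hdisj := disjoint_scheme_cons W P (x₀ n) (path x₀ n)
    rcases isPreconnected_iff_subset_of_disjoint_closed.1 hC _ _ (scheme W P _).2.1.closed
      (scheme W P _).2.1.closed hcover (by rw [hdisj.inter_eq, inter_empty]) with h | h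
    · exact h hy
    · exact absurd (h hc) (disjoint_left.1 hdisj (mem_iInter.1 hc₀ (n + 1)))

noncomputable def points : Set Y := range fun s => (scheme W P s).point

theorem exists_mem_closure_points_branch [CompactSpace Y] (x : ℕ → Bool) :
    ∃ y ∈ closure (points W P), y ∈ branch W P x := by
  obtain ⟨y, -, hy⟩ := isCompact_univ.exists_clusterPt
    (f := map (fun n => (scheme W P (path x n)).point) atTop) (le_principal_iff.2 univ_mem)
  refine ⟨y, closure_mono (range_subset_iff.2 fun n => mem_range_self _)
    (hy.mem_closure_of_mem _ range_mem_map), mem_iInter.2 fun n => ?_⟩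
  rw [← (scheme W P (path x n)).2.1.closed.closure_eq]
  exact hy.mem_closure_of_mem _ (mem_map.2 (eventually_atTop.2 ⟨n, fun j hj =>
    scheme_path_antitone W P x hj (NonemptyPerfect.point_mem _)⟩))

def graph : Set (Y × (ℕ → Bool)) := {p | p.1 ∈ closure (points W P) ∧ p.1 ∈ branch W P p.2}

theorem isClosed_graph : IsClosed (graph W P) := by
  simp only [graph, branch, mem_iInter, ofPred_and, ofPred_forall]
  refine (isClosed_closure.preimage continuous_fst).inter (isClosed_iInter fun n => ?_)
  rw [← isOpen_compl_iff, isOpen_iff_mem_nhds]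
  intro p hp
  filter_upwards [continuous_fst.continuousAt.preimage_mem_nhds
      ((scheme W P (path p.2 n)).2.1.closed.isOpen_compl.mem_nhds hp),
    continuous_snd.continuousAt.preimage_mem_nhds
      (((continuous_path n).isOpen_preimage {path p.2 n} (isOpen_discrete _)).mem_nhds rfl)]
    with q hq1 hq2
  simp only [mem_preimage, mem_singleton_iff] at hq2
  simpa [hq2] using hq1

end CantorScheme

open CantorScheme

instance (x : ℕ → Bool) : (𝓝[≠] x).NeBot := by
  refine Tendsto.neBot (f := fun n => Function.update x n (!x n)) (α := ℕ) (x := atTop)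
    (tendsto_nhdsWithin_iff.2 ⟨tendsto_pi_nhds.2 fun i => ?_, Eventually.of_forall fun n => ?_⟩)
  · exact tendsto_const_nhds.congr' (eventually_atTop.2
      ⟨i + 1, fun n hn => (Function.update_of_ne (by omega) _ _).symm⟩)
  · exact fun h => by simpa using congrFun h n

theorem exists_perfect_subset_uncut {Y ι : Type*} [TopologicalSpace Y] [CompactSpace Y]
    [T2Space Y] [Encodable ι] [Inhabited ι] (W : ι → Y → Opens Y) (P : NonemptyPerfect Y) :
    ∃ H D : Set Y, Perfect H ∧ H.Nonempty ∧ H ⊆ closure D ∧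
      ∀ C ⊆ H, IsPreconnected C → ∀ k, ∀ d ∈ D, C ⊆ closure (W k d) ∨ Disjoint C (W k d) := by
  obtain ⟨E, hEG, hE, hEsurj⟩ := exists_perfect_subset_image_eq_univ continuous_snd
    (isClosed_graph W P) <| eq_univ_of_forall fun x => by
      obtain ⟨y, hy, hyx⟩ := exists_mem_closure_points_branch W P x
      exact ⟨(y, x), ⟨hy, hyx⟩, rfl⟩
  have hinj : InjOn Prod.fst E := fun p hp q hq hpq => Prod.ext hpq <| by
    by_contra hne
    exact disjoint_left.1 (disjoint_branch W P hne) (hEG hp).2 (hpq ▸ (hEG hq).2)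
  refine ⟨Prod.fst '' E, points W P, hE.image_of_injOn continuous_fst hE.closed.isCompact hinj,
    ((image_nonempty.1 (hEsurj ▸ univ_nonempty)).image _), ?_, ?_⟩
  · rintro _ ⟨p, hp, rfl⟩
    exact (hEG hp).1
  · rintro C hCH hC k _ ⟨t, rfl⟩
    obtain ⟨x, hx⟩ := exists_subset_branch W P hC fun y hy => by
      obtain ⟨p, hp, rfl⟩ := hCH hy
      exact ⟨p.2, (hEG hp).2⟩
    exact (branch_subset_closure_or_disjoint W P x k t).imp hx.trans (Disjoint.mono_left hx)

theorem exists_perfect_isTotallyDisconnected {Z : ℕ → Type*} [∀ m, TopologicalSpace (Z m)]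
    (F : ∀ m, SeparatingFamily (Z m)) (X : Set (∀ m, Z m)) [CompactSpace X] [T2Space X]
    (P : NonemptyPerfect X) : ∃ H : Set X, Perfect H ∧ H.Nonempty ∧ IsTotallyDisconnected H := by
  let π (m : ℕ) (y : X) : Z m := (y : ∀ m, Z m) m
  have hπ (m : ℕ) : Continuous (π m) := (continuous_apply m).comp continuous_subtype_val
  let W (k : ℕ × ℕ) (y : X) : Opens X :=
    ⟨π k.1 ⁻¹' (F k.1).U k.2 (π k.1 y), ((F _).U _ _).isOpen.preimage (hπ _)⟩
  obtain ⟨H, D, hH, hHne, hHD, huncut⟩ := exists_perfect_subset_uncut W P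
  refine ⟨H, hH, hHne, fun C hCH hC a ha b hb => Subtype.ext (funext fun m => ?_)⟩
  refine (F m).subsingleton (hC.image _ (hπ m).continuousOn)
    ((image_mono (hCH.trans hHD)).trans (image_closure_subset_closure_image (hπ m)))
    (fun j _ ⟨d, hd, hdz⟩ => ?_) (mem_image_of_mem _ ha) (mem_image_of_mem _ hb)
  subst hdz
  rcases huncut C hCH hC (m, j) d hd with h | h
  · exact Or.inl (image_subset_iff.2 (h.trans ((hπ m).closure_preimage_subset _)))
  · exact Or.inr (disjoint_image_left.2 h)

theorem stmt9_general (Z : ℕ → Type*) [∀ j, TopologicalSpace (Z j)]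
    [∀ j, T2Space (Z j)]
    (hZ : ∀ j, SecondCountableTopology (Z j) ∨
      ∃ l : LinearOrder (Z j), @OrderTopology (Z j) _ l.toPartialOrder.toPreorder)
    (X : Set (∀ j, Z j)) : ¬ Weird X := by
  rintro ⟨_, _, hscattered, hweird⟩
  obtain ⟨P, hP, hPne⟩ := exists_perfect_nonempty_of_not_scatteredSpace hscattered
  have F (j : ℕ) : SeparatingFamily (Z j) := Nonempty.some <| (hZ j).elim
    (fun _ => SeparatingFamily.nonempty_of_secondCountable)
    fun ⟨l, _⟩ => by let := l; exact SeparatingFamily.nonempty_of_orderTopology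
  obtain ⟨H, hH, hHne, hHtd⟩ := exists_perfect_isTotallyDisconnected F X ⟨P, hP, hPne⟩
  exact hweird H hH hHne hHtd

theorem stmt9 (Z : ℕ → Type*) [∀ j, TopologicalSpace (Z j)]
    [∀ j, CompactSpace (Z j)] [∀ j, T2Space (Z j)]
    (hZ : ∀ j, SecondCountableTopology (Z j) ∨
      ∃ l : LinearOrder (Z j), @OrderTopology (Z j) _ l.toPartialOrder.toPreorder)
    (X : Set (∀ j, Z j)) : ¬ Weird X :=
  stmt9_general Z hZ X
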